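/- In the setting of local potentials on a chart: let Σ be a smooth closed oriented 6-manifold, f : Σ → U smooth, H₃ ∈ Ω³(Σ) with dH₃ = f*G₄, and let (C₃, 2C₆) and (C₃ + dα₂, 2C₆ + α₂ ∧ G₄ + dα₅) be two choices of local potentials (dC₃ = G₄, d(2C₆) = 2G₇ + C₃ ∧ G₄), where α₂ ∈ Ω²(U), α₅ ∈ Ω⁵(U). Then ∫_Σ (−H₃ ∧ f*C₃ + f*2C₆) is unchanged under the change of potentials. -/
import Mathlib


/-- **Well-definedness of the local 6d Wess-Zumino functional.**
Here `ΩU k` stands for the smooth `k`-forms on a chart `U` (a smooth manifold with trivial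
positive-degree de Rham cohomology) carrying a closed `G₄ ∈ Ω⁴(U)` and `G₇₂ ∈ Ω⁷(U)`
(playing the role of `2G₇`), and `ΩS k` for the smooth `k`-forms on a smooth closed
oriented 6-manifold `Σ`; `f` is pullback of forms along a smooth map `f : Σ → U`,
`intS` is integration of 6-forms over `Σ`, and the `u`/`s` maps are wedge products in the
indicated degrees.  `hstokes` is Stokes' theorem on the closed manifold `Σ`, `leib32` the
Leibniz rule, `hcomm` graded commutativity in even degrees, and `hf_d`, `hf_w` naturality
of pullback.  Given `H₃ ∈ Ω³(Σ)` with `dH₃ = f*G₄` and two choices of local potentials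
`(C₃, 2C₆)` and `(C₃ + dα₂, 2C₆ + α₂ ∧ G₄ + dα₅)` (with `dC₃ = G₄` and
`d(2C₆) = 2G₇ + C₃ ∧ G₄`), the integral `∫_Σ (−H₃ ∧ f*C₃ + f*(2C₆))` is unchanged under
the change of potentials. -/
theorem local_WZ_term_well_defined
    (ΩU ΩS : ℕ → Type*)
    [∀ k, AddCommGroup (ΩU k)] [∀ k, Module ℝ (ΩU k)]
    [∀ k, AddCommGroup (ΩS k)] [∀ k, Module ℝ (ΩS k)]
    (dU : ∀ k, ΩU k →ₗ[ℝ] ΩU (k + 1)) (dS : ∀ k, ΩS k →ₗ[ℝ] ΩS (k + 1))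
    (f : ∀ k, ΩU k →ₗ[ℝ] ΩS k)
    (u24 : ΩU 2 →ₗ[ℝ] ΩU 4 →ₗ[ℝ] ΩU 6)
    (u34 : ΩU 3 →ₗ[ℝ] ΩU 4 →ₗ[ℝ] ΩU 7)
    (s33 : ΩS 3 →ₗ[ℝ] ΩS 3 →ₗ[ℝ] ΩS 6)
    (s32 : ΩS 3 →ₗ[ℝ] ΩS 2 →ₗ[ℝ] ΩS 5)
    (s42 : ΩS 4 →ₗ[ℝ] ΩS 2 →ₗ[ℝ] ΩS 6)
    (s24 : ΩS 2 →ₗ[ℝ] ΩS 4 →ₗ[ℝ] ΩS 6)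
    (intS : ΩS 6 →ₗ[ℝ] ℝ)
    (hstokes : ∀ η : ΩS 5, intS (dS 5 η) = 0)
    (hf_d : ∀ k (ω : ΩU k), f (k + 1) (dU k ω) = dS k (f k ω))
    (hf_w : ∀ (a : ΩU 2) (b : ΩU 4), f 6 (u24 a b) = s24 (f 2 a) (f 4 b))
    (leib32 : ∀ (a : ΩS 3) (b : ΩS 2),
      dS 5 (s32 a b) = s42 (dS 3 a) b - s33 a (dS 2 b))
    (hcomm : ∀ (a : ΩS 4) (b : ΩS 2), s42 a b = s24 b a)
    (G₄ : ΩU 4) (G₇₂ : ΩU 7) (hG₄ : dU 4 G₄ = 0)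
    (C₃ : ΩU 3) (C₆₂ : ΩU 6) (α₂ : ΩU 2) (α₅ : ΩU 5)
    (hC₃ : dU 3 C₃ = G₄)
    (hC₆ : dU 6 C₆₂ = G₇₂ + u34 C₃ G₄)
    (H₃ : ΩS 3) (hH₃ : dS 3 H₃ = f 4 G₄) :
    intS (- s33 H₃ (f 3 C₃) + f 6 C₆₂) =
      intS (- s33 H₃ (f 3 (C₃ + dU 2 α₂)) + f 6 (C₆₂ + u24 α₂ G₄ + dU 5 α₅)) := by
  have key := hstokes (s32 H₃ (f 2 α₂))
  rw [leib32, hH₃, hcomm, map_sub] at key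
  have h5 := hstokes (f 5 α₅)
  simp only [map_add, map_neg, hf_d, hf_w]
  linarith
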